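/- arXiv:1111.5140 — 4 statements merged into one kernel-verified Lean document; each statement's English description precedes it below -/
import Mathlib

section
/- Let τ > 0, let s : [0,∞) → ℝ be differentiable with |s'(t)| ≤ Kε for all t ≥ 0 (K a constant, ε > 0), and let z solve z'(t) = -z(t)/τ + s'(t) with |z(0)| ≤ C₀ε^δ. Assume e^{-t/τ} ≤ C e^{-t ε^{1-δ}/C} for all t ≥ 0 (with C ≥ 1, 0 < δ < 1). Then sup_{t ≥ 0} |z(t)| ≤ C₀ε^δ + CKC ε^δ, i.e. |z(t)| = O(ε^δ) uniformly in t. -/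
/-!
Variation of constants: `e^{t/τ} z(t)` has derivative `e^{t/τ} s'(t)`, so
`|z(t)| ≤ e^{-t/τ} |z(0)| + τKε (1 - e^{-t/τ}) ≤ |z(0)| + τKε`.
The decay hypothesis bounds `e^{t (ε^{1-δ}/C - 1/τ)}` by `C` for all `t ≥ 0`, which forces
`ε^{1-δ}/C ≤ 1/τ`, i.e. `τ ≤ C ε^{δ-1}`; hence `τKε ≤ CKε^δ ≤ CKCε^δ`.
-/

open Real

open Set Filter

lemma nonpos_of_forall_exp_mul_le {c C : ℝ} (h : ∀ t ≥ (0 : ℝ), exp (t * c) ≤ C) : c ≤ 0 := by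
  by_contra! hc
  have hgrow := (tendsto_exp_atTop.comp (tendsto_id.atTop_mul_const hc)).eventually_gt_atTop C
  obtain ⟨t, htC, ht0⟩ := (hgrow.and (eventually_ge_atTop 0)).exists
  exact (h t ht0).not_gt htC

lemma le_inv_of_exp_neg_div_le_mul_exp_neg_mul {τ a C : ℝ}
    (h : ∀ t ≥ (0 : ℝ), exp (-t / τ) ≤ C * exp (-t * a)) : a ≤ τ⁻¹ := by
  refine sub_nonpos.mp (nonpos_of_forall_exp_mul_le (C := C) fun t ht => ?_)
  calc exp (t * (a - τ⁻¹)) = exp (-t / τ) * exp (t * a) := by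
        rw [← exp_add]; ring_nf
    _ ≤ C * exp (-t * a) * exp (t * a) := by gcongr; exact h t ht
    _ = C := by rw [mul_assoc, ← exp_add]; simp

section

variable {E : Type*} [NormedAddCommGroup E] [NormedSpace ℝ E]

lemma hasDerivAt_exp_div_smul {τ t : ℝ} {z : ℝ → E} {f : E}
    (hz : HasDerivAt z (-τ⁻¹ • z t + f) t) :
    HasDerivAt (fun x => exp (x / τ) • z x) (exp (t / τ) • f) t := by
  have he : HasDerivAt (fun x => exp (x / τ)) (exp (t / τ) * τ⁻¹) t := by
    simpa [div_eq_mul_inv] using ((hasDerivAt_id t).div_const τ).exp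
  refine (he.smul hz).congr_deriv ?_
  rw [smul_add, smul_smul, mul_neg, neg_smul]
  abel

lemma norm_le_of_hasDerivAt_neg_inv_smul_add {τ M : ℝ} (hτ : 0 < τ) {z f : ℝ → E}
    (hz : ∀ t ≥ (0 : ℝ), HasDerivAt z (-τ⁻¹ • z t + f t) t)
    (hf : ∀ t ≥ (0 : ℝ), ‖f t‖ ≤ M) {t : ℝ} (ht : 0 ≤ t) :
    ‖z t‖ ≤ exp (-t / τ) * ‖z 0‖ + τ * M * (1 - exp (-t / τ)) := by
  have hw : ∀ x ≥ (0 : ℝ), HasDerivAt (fun x => exp (x / τ) • z x) (exp (x / τ) • f x) x :=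
    fun x hx => hasDerivAt_exp_div_smul (hz x hx)
  have hB : ∀ x, HasDerivAt (fun x => ‖z 0‖ + τ * M * (exp (x / τ) - 1)) (M * exp (x / τ)) x := by
    intro x
    refine ((((hasDerivAt_id' x).div_const τ).exp.sub_const 1).const_mul (τ * M)
      |>.const_add ‖z 0‖).congr_deriv ?_
    field_simp
  have hbound := image_norm_le_of_norm_deriv_right_le_deriv_boundary
    (fun x hx => (hw x hx.1).continuousAt.continuousWithinAt)
    (fun x hx => (hw x hx.1).hasDerivWithinAt) (by simp) hB
    (fun x hx => by
      rw [norm_smul, norm_of_nonneg (exp_pos _).le, mul_comm]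
      exact mul_le_mul_of_nonneg_right (hf x hx.1) (exp_pos _).le)
    (right_mem_Icc.mpr ht)
  rw [norm_smul, norm_of_nonneg (exp_pos _).le] at hbound
  have hinv : exp (-t / τ) * exp (t / τ) = 1 := by rw [← exp_add, neg_div, neg_add_cancel, exp_zero]
  calc ‖z t‖ = exp (-t / τ) * (exp (t / τ) * ‖z t‖) := by rw [← mul_assoc, hinv, one_mul]
    _ ≤ exp (-t / τ) * (‖z 0‖ + τ * M * (exp (t / τ) - 1)) := by gcongr
    _ = _ := by linear_combination (τ * M) * hinv

end

theorem stmt5_general (τ ε δ K C C₀ : ℝ) (hτ : 0 < τ) (hε : 0 < ε)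
    (hC : 1 ≤ C) (hK : 0 ≤ K)
    (s' z : ℝ → ℝ)
    (hs' : ∀ t ≥ (0 : ℝ), |s' t| ≤ K * ε)
    (hz : ∀ t ≥ (0 : ℝ), HasDerivAt z (-(z t) / τ + s' t) t)
    (hz0 : |z 0| ≤ C₀ * ε ^ δ)
    (hdecay : ∀ t ≥ (0 : ℝ), Real.exp (-t / τ) ≤ C * Real.exp (-t * ε ^ (1 - δ) / C)) :
    ∀ t ≥ (0 : ℝ), |z t| ≤ C₀ * ε ^ δ + C * K * C * ε ^ δ := by
  intro t ht
  have hrate : τ * ε ^ (1 - δ) ≤ C := by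
    have := le_inv_of_exp_neg_div_le_mul_exp_neg_mul fun t ht =>
      (hdecay t ht).trans_eq (by rw [mul_div_assoc])
    rwa [div_le_iff₀ (by positivity), ← div_eq_inv_mul, le_div_iff₀ hτ, mul_comm] at this
  have hduhamel := norm_le_of_hasDerivAt_neg_inv_smul_add hτ (z := z) (f := s')
    (fun x hx => (hz x hx).congr_deriv (by rw [smul_eq_mul]; ring)) hs' ht
  have hexp : exp (-t / τ) ≤ 1 :=
    exp_le_one_iff.mpr (div_nonpos_of_nonpos_of_nonneg (by linarith) hτ.le)
  have hsplit : ε ^ (1 - δ) * ε ^ δ = ε := by rw [← rpow_add hε]; simp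
  calc |z t| ≤ |z 0| + τ * (K * ε) := by
        simp only [Real.norm_eq_abs] at hduhamel
        nlinarith [abs_nonneg (z 0), exp_pos (-t / τ), mul_nonneg hτ.le (mul_nonneg hK hε.le)]
    _ = |z 0| + K * (τ * ε ^ (1 - δ)) * ε ^ δ := by linear_combination (-(τ * K)) * hsplit
    _ ≤ C₀ * ε ^ δ + K * (C * C) * ε ^ δ := by
        gcongr ?_ + K * ?_ * _
        exact hrate.trans (le_mul_of_one_le_left (by linarith) hC)
    _ = C₀ * ε ^ δ + C * K * C * ε ^ δ := by ring

/-- Scalar version: if `z' = -z/τ + s'` with `|s'(t)| ≤ Kε`, `|z(0)| ≤ C₀ε^δ`,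
and the semigroup bound `e^{-t/τ} ≤ C e^{-tε^{1-δ}/C}` holds, then
`|z(t)| ≤ C₀ε^δ + C·K·C·ε^δ` for all `t ≥ 0`. -/
theorem stmt5 (τ ε δ K C C₀ : ℝ) (hτ : 0 < τ) (hε : 0 < ε)
    (hδ : 0 < δ) (hδ1 : δ < 1) (hC : 1 ≤ C) (hK : 0 ≤ K) (hC₀ : 0 ≤ C₀)
    (s s' z : ℝ → ℝ)
    (hs : ∀ t ≥ (0 : ℝ), HasDerivAt s (s' t) t)
    (hs' : ∀ t ≥ (0 : ℝ), |s' t| ≤ K * ε)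
    (hz : ∀ t ≥ (0 : ℝ), HasDerivAt z (-(z t) / τ + s' t) t)
    (hz0 : |z 0| ≤ C₀ * ε ^ δ)
    (hdecay : ∀ t ≥ (0 : ℝ), Real.exp (-t / τ) ≤ C * Real.exp (-t * ε ^ (1 - δ) / C)) :
    ∀ t ≥ (0 : ℝ), |z t| ≤ C₀ * ε ^ δ + C * K * C * ε ^ δ :=
  stmt5_general τ ε δ K C C₀ hτ hε hC hK s' z hs' hz hz0 hdecay
end

section
/- Let τ > 0 and suppose sup_{t≥0} |t τ^{-1} e^{-t/τ}| ≤ C/ε and e^{-t/τ} ≤ C e^{-tε^{1-δ}/C} for all t ≥ 0. Let z solve z'(t) = -z(t)/τ + g(t) with |g(t)| ≤ Kε for all t, and suppose |τ^{-1}z(0)| ≤ C₀. Then sup_{t≥0} |τ^{-1} e^{-t/τ} z(t)| is bounded by a constant independent of ε. -/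
open Real

/-! Grönwall gives `|z t| ≤ (|z 0| + τ sup |g|) e^{t/τ}`, and the weight `e^{-t/τ}` cancels this
growth exactly, so the weighted solution stays below `|τ⁻¹ z 0| + K ε ≤ C₀ + C² K`. -/

theorem abs_le_mul_exp_of_hasDerivAt_neg_div_add {τ M : ℝ} {g z : ℝ → ℝ} (hτ : 0 < τ)
    (hz : ∀ t ≥ (0 : ℝ), HasDerivAt z (-(z t) / τ + g t) t)
    (hg : ∀ t ≥ (0 : ℝ), |g t| ≤ M) :
    ∀ t ≥ (0 : ℝ), |z t| ≤ (|z 0| + τ * M) * exp (t / τ) := by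
  intro t ht
  have hM : 0 ≤ M := (abs_nonneg _).trans (hg 0 le_rfl)
  have hgron : |z t| ≤ gronwallBound |z 0| τ⁻¹ M (t - 0) := by
    refine norm_le_gronwallBound_of_norm_deriv_right_le (f' := fun s => -(z s) / τ + g s)
      (fun s hs => (hz s hs.1).continuousAt.continuousWithinAt)
      (fun s hs => (hz s hs.1).hasDerivWithinAt) le_rfl (fun s hs => ?_) t ⟨ht, le_rfl⟩
    calc ‖-(z s) / τ + g s‖ ≤ |-(z s) / τ| + |g s| := abs_add_le _ _
      _ ≤ τ⁻¹ * ‖z s‖ + M := by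
        rw [abs_div, abs_neg, abs_of_pos hτ, div_eq_inv_mul, Real.norm_eq_abs]
        exact add_le_add_right (hg s hs.1) _
  rw [gronwallBound_of_K_ne_0 (inv_ne_zero hτ.ne'), sub_zero, div_inv_eq_mul] at hgron
  simp only [inv_mul_eq_div] at hgron
  have : 0 ≤ M * τ := by positivity
  nlinarith

theorem abs_inv_mul_exp_mul_le_of_hasDerivAt_neg_div_add {τ M : ℝ} {g z : ℝ → ℝ} (hτ : 0 < τ)
    (hz : ∀ t ≥ (0 : ℝ), HasDerivAt z (-(z t) / τ + g t) t)
    (hg : ∀ t ≥ (0 : ℝ), |g t| ≤ M) :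
    ∀ t ≥ (0 : ℝ), |τ⁻¹ * exp (-t / τ) * z t| ≤ |τ⁻¹ * z 0| + M := by
  intro t ht
  have hexp : exp (-t / τ) * exp (t / τ) = 1 := by
    rw [← exp_add, neg_div, neg_add_cancel, exp_zero]
  rw [neg_div] at hexp
  calc |τ⁻¹ * exp (-t / τ) * z t| = τ⁻¹ * exp (-t / τ) * |z t| := by
        rw [abs_mul, abs_mul, abs_of_pos (inv_pos.2 hτ), abs_of_pos (exp_pos _)]
    _ ≤ τ⁻¹ * exp (-t / τ) * ((|z 0| + τ * M) * exp (t / τ)) := by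
        gcongr
        exact abs_le_mul_exp_of_hasDerivAt_neg_div_add hτ hz hg t ht
    _ = |τ⁻¹ * z 0| + M := by
        rw [abs_mul, abs_of_pos (inv_pos.2 hτ)]
        field_simp
        linear_combination (|z 0| + τ * M) * hexp

theorem stmt6_general (τ ε K C C₀ : ℝ) (hτ : 0 < τ) (hε : 0 < ε) (hε1 : ε < 1)
    (hC : 1 ≤ C) (hK : 0 ≤ K)
    (g z : ℝ → ℝ)
    (hz : ∀ t ≥ (0 : ℝ), HasDerivAt z (-(z t) / τ + g t) t)
    (hg : ∀ t ≥ (0 : ℝ), |g t| ≤ K * ε)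
    (hz0 : |τ⁻¹ * z 0| ≤ C₀) :
    ∀ t ≥ (0 : ℝ), |τ⁻¹ * Real.exp (-t / τ) * z t| ≤ C₀ + C * C * K := by
  intro t ht
  have hKε : K * ε ≤ C * C * K := by
    nlinarith [mul_le_mul_of_nonneg_left hC (zero_le_one.trans hC)]
  linarith [abs_inv_mul_exp_mul_le_of_hasDerivAt_neg_div_add hτ hz hg t ht]

/-- Scalar version of Lemma lem:techbound: under the bounds
`sup_t |t τ⁻¹ e^{-t/τ}| ≤ C/ε` and `e^{-t/τ} ≤ C e^{-tε^{1-δ}/C}`, if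
`z' = -z/τ + g` with `|g| ≤ Kε` and `|τ⁻¹ z(0)| ≤ C₀`, then
`|τ⁻¹ e^{-t/τ} z(t)|` is bounded by a constant independent of `ε`. -/
theorem stmt6 (τ ε δ K C C₀ : ℝ) (hτ : 0 < τ) (hε : 0 < ε) (hε1 : ε < 1)
    (hδ : 0 < δ) (hδ1 : δ < 1) (hC : 1 ≤ C) (hK : 0 ≤ K) (hC₀ : 0 ≤ C₀)
    (g z : ℝ → ℝ)
    (hsup : ∀ t ≥ (0 : ℝ), |t * τ⁻¹ * Real.exp (-t / τ)| ≤ C / ε)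
    (hdecay : ∀ t ≥ (0 : ℝ), Real.exp (-t / τ) ≤ C * Real.exp (-t * ε ^ (1 - δ) / C))
    (hz : ∀ t ≥ (0 : ℝ), HasDerivAt z (-(z t) / τ + g t) t)
    (hg : ∀ t ≥ (0 : ℝ), |g t| ≤ K * ε)
    (hz0 : |τ⁻¹ * z 0| ≤ C₀) :
    ∀ t ≥ (0 : ℝ), |τ⁻¹ * Real.exp (-t / τ) * z t| ≤ C₀ + C * C * K :=
  stmt6_general τ ε K C C₀ hτ hε hε1 hC hK g z hz hg hz0
end

section
/- Let α : [0, 2T] → [0,∞) be continuous and strictly increasing with α(0) = 0, let X : [0,∞) → ℝ^d and X⁰ : [0,∞) → ℝ^d be continuous. Then for every T > 0, sup_{t ∈ [0,T]} min(|X(t) - X⁰(t)|, 1) ≤ sup_{s ∈ [0,2T]} min(|X(α(s)) - X⁰(s)|, 1) + sup_{s ∈ [0,2T]} min(|X⁰(α(s)) - X⁰(s)|, 1) + 2·𝟙[α(2T) ≤ T]. -/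
open Real

/-!
If `α (2T) ≤ T`, the indicator term alone dominates, since the left side is at most `1`.
Otherwise `α 0 = 0 ≤ t < α (2T)`, so by the intermediate value theorem `t = α s` for some
`s ∈ [0, 2T]`, and the triangle inequality for the truncated distance `min ‖· - ·‖ 1`
through `X⁰ s` bounds the left side by the two suprema.
-/

theorem min_one_le_add_of_le_add {a b c : ℝ} (hb : 0 ≤ b) (hc : 0 ≤ c) (h : a ≤ b + c) :
    min a 1 ≤ min b 1 + min c 1 := by
  rcases le_total b 1 with hb1 | hb1 <;> rcases le_total c 1 with hc1 | hc1 <;>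
    simp only [min_eq_left, min_eq_right, *] <;> grind

theorem min_norm_sub_one_le_add {E : Type*} [SeminormedAddCommGroup E] (x y z : E) :
    min ‖x - y‖ 1 ≤ min ‖x - z‖ 1 + min ‖y - z‖ 1 :=
  min_one_le_add_of_le_add (norm_nonneg _) (norm_nonneg _) (by
    simpa only [dist_eq_norm] using dist_triangle_right x y z)

theorem bddAbove_range_min_one {ι : Type*} (f : ι → ℝ) :
    BddAbove (Set.range fun i => min (f i) 1) :=
  ⟨1, by rintro _ ⟨i, rfl⟩; exact min_le_right _ _⟩

theorem iSup_min_norm_one_nonneg {ι E : Type*} [SeminormedAddCommGroup E] (f : ι → E) :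
    0 ≤ ⨆ i, min ‖f i‖ 1 :=
  Real.iSup_nonneg fun _ => le_min (norm_nonneg _) zero_le_one

theorem stmt10_general (d : ℕ) (T : ℝ)
    (α : ℝ → ℝ)
    (hcont : ContinuousOn α (Set.Icc 0 (2 * T)))
    (hα0 : α 0 = 0)
    (X X0 : ℝ → EuclideanSpace ℝ (Fin d)) :
    ∀ t ∈ Set.Icc (0 : ℝ) T,
      min ‖X t - X0 t‖ 1
        ≤ (⨆ s : Set.Icc (0 : ℝ) (2 * T), min ‖X (α s) - X0 s‖ 1)
          + (⨆ s : Set.Icc (0 : ℝ) (2 * T), min ‖X0 (α s) - X0 s‖ 1)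
          + 2 * (if α (2 * T) ≤ T then 1 else 0) := by
  intro t ⟨ht0, htT⟩
  have hsup₁ := iSup_min_norm_one_nonneg fun s : Set.Icc (0 : ℝ) (2 * T) => X (α s) - X0 s
  have hsup₂ := iSup_min_norm_one_nonneg fun s : Set.Icc (0 : ℝ) (2 * T) => X0 (α s) - X0 s
  split_ifs with hαT
  · linarith [min_le_right ‖X t - X0 t‖ 1]
  · obtain ⟨s, hs, rfl⟩ : ∃ s ∈ Set.Icc 0 (2 * T), α s = t :=
      intermediate_value_Icc (by linarith) hcont ⟨by rwa [hα0], by linarith⟩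
    calc min ‖X (α s) - X0 (α s)‖ 1
        ≤ min ‖X (α s) - X0 s‖ 1 + min ‖X0 (α s) - X0 s‖ 1 := min_norm_sub_one_le_add ..
      _ ≤ _ := by
        have h₁ := le_ciSup (bddAbove_range_min_one fun s : Set.Icc (0 : ℝ) (2 * T) =>
          ‖X (α s) - X0 s‖) ⟨s, hs⟩
        have h₂ := le_ciSup (bddAbove_range_min_one fun s : Set.Icc (0 : ℝ) (2 * T) =>
          ‖X0 (α s) - X0 s‖) ⟨s, hs⟩
        linarith

/-- Deterministic pathwise inequality behind the random time change lemma: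
for a continuous strictly increasing time change `α` with `α(0) = 0`,
`sup_{[0,T]} min(|X - X⁰|,1)` is bounded by the two time-changed suprema on
`[0,2T]` plus `2·𝟙[α(2T) ≤ T]`. -/
theorem stmt10 (d : ℕ) (T : ℝ) (hT : 0 < T)
    (α : ℝ → ℝ)
    (hcont : ContinuousOn α (Set.Icc 0 (2 * T)))
    (hmono : StrictMonoOn α (Set.Icc 0 (2 * T)))
    (hα0 : α 0 = 0)
    (X X0 : ℝ → EuclideanSpace ℝ (Fin d))
    (hX : Continuous X) (hX0 : Continuous X0) :
    ∀ t ∈ Set.Icc (0 : ℝ) T,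
      min ‖X t - X0 t‖ 1
        ≤ (⨆ s : Set.Icc (0 : ℝ) (2 * T), min ‖X (α s) - X0 s‖ 1)
          + (⨆ s : Set.Icc (0 : ℝ) (2 * T), min ‖X0 (α s) - X0 s‖ 1)
          + 2 * (if α (2 * T) ≤ T then 1 else 0) :=
  stmt10_general d T α hcont hα0 X X0
end

section
/- Let λ_min > 0 bound two measurable rates λ, λ̂ : [0,∞) → [λ_min, λ_max] from below, and let T, T̂ > 0 satisfy ∫₀^T λ(t) dt = ∫₀^{T̂} λ̂(t) dt = θ for the same θ > 0. Then |T - T̂| ≤ (1/λ_min) ∫₀^{min(T,T̂)} |λ(t) - λ̂(t)| dt. -/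
open Real MeasureTheory intervalIntegral Set

theorem Measurable.intervalIntegrable_of_norm_le {f : ℝ → ℝ} {a b C : ℝ} (hf : Measurable f)
    (hC : ∀ t ∈ uIcc a b, ‖f t‖ ≤ C) : IntervalIntegrable f volume a b :=
  intervalIntegrable_const.mono_fun' hf.aestronglyMeasurable <|
    (ae_restrict_iff' measurableSet_uIoc).2 <| .of_forall fun t ht => hC t (uIoc_subset_uIcc ht)

-- The excess `∫_T^T' g ≥ c (T' - T)` of the longer integral equals `∫₀^T (f - g)`.
theorem mul_sub_le_integral_abs_sub {f g : ℝ → ℝ} {c T T' : ℝ} (hT : 0 ≤ T) (hTT' : T ≤ T')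
    (hf : IntervalIntegrable f volume 0 T) (hg : IntervalIntegrable g volume 0 T')
    (hg_ge : ∀ t ∈ Icc T T', c ≤ g t) (heq : ∫ t in 0..T, f t = ∫ t in 0..T', g t) :
    c * (T' - T) ≤ ∫ t in 0..T, |f t - g t| := by
  have hg₀ : IntervalIntegrable g volume 0 T :=
    hg.mono_set (uIcc_subset_uIcc_left (by rw [uIcc_of_le (hT.trans hTT')]; exact ⟨hT, hTT'⟩))
  have hg₁ : IntervalIntegrable g volume T T' := hg₀.symm.trans hg
  calc c * (T' - T) = ∫ _ in T..T', c := by rw [intervalIntegral.integral_const, smul_eq_mul, mul_comm]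
    _ ≤ ∫ t in T..T', g t := integral_mono_on hTT' intervalIntegrable_const hg₁ hg_ge
    _ = ∫ t in 0..T, (f t - g t) := by
      rw [integral_sub hf hg₀, heq, integral_interval_sub_left hg hg₀]
    _ ≤ ∫ t in 0..T, |f t - g t| :=
      integral_mono_on hT (hf.sub hg₀) (hf.sub hg₀).abs fun t _ => le_abs_self _

theorem mul_abs_sub_le_integral_abs_sub {f g : ℝ → ℝ} {c T T' : ℝ} (hT : 0 ≤ T) (hT' : 0 ≤ T')
    (hf : IntervalIntegrable f volume 0 T) (hg : IntervalIntegrable g volume 0 T')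
    (hf_ge : ∀ t ≥ 0, c ≤ f t) (hg_ge : ∀ t ≥ 0, c ≤ g t)
    (heq : ∫ t in 0..T, f t = ∫ t in 0..T', g t) :
    c * |T - T'| ≤ ∫ t in 0..min T T', |f t - g t| := by
  rcases le_total T T' with h | h
  · rw [min_eq_left h, abs_sub_comm, abs_of_nonneg (sub_nonneg.2 h)]
    exact mul_sub_le_integral_abs_sub hT h hf hg (fun t ht => hg_ge t (hT.trans ht.1)) heq
  · rw [min_eq_right h, abs_of_nonneg (sub_nonneg.2 h)]
    simp_rw [abs_sub_comm (f _)]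
    exact mul_sub_le_integral_abs_sub hT' h hg hf (fun t ht => hf_ge t (hT'.trans ht.1)) heq.symm

theorem stmt19_general (lamMin lamMax θ T That : ℝ) (hmin : 0 < lamMin)
    (lam lamHat : ℝ → ℝ) (hm1 : Measurable lam) (hm2 : Measurable lamHat)
    (hb1 : ∀ t ≥ (0 : ℝ), lamMin ≤ lam t ∧ lam t ≤ lamMax)
    (hb2 : ∀ t ≥ (0 : ℝ), lamMin ≤ lamHat t ∧ lamHat t ≤ lamMax)
    (hT : 0 < T) (hThat : 0 < That)
    (hint1 : ∫ t in (0 : ℝ)..T, lam t = θ)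
    (hint2 : ∫ t in (0 : ℝ)..That, lamHat t = θ) :
    |T - That| ≤ (1 / lamMin) * ∫ t in (0 : ℝ)..(min T That), |lam t - lamHat t| := by
  have integrable {f : ℝ → ℝ} (hf : Measurable f) (hb : ∀ t ≥ (0 : ℝ), lamMin ≤ f t ∧ f t ≤ lamMax)
      {b : ℝ} (hb₀ : 0 ≤ b) : IntervalIntegrable f volume 0 b :=
    hf.intervalIntegrable_of_norm_le fun t ht => by
      rw [uIcc_of_le hb₀] at ht
      have := hb t ht.1
      rw [norm_eq_abs, abs_le]
      constructor <;> linarith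
  rw [one_div_mul_eq_div, le_div_iff₀ hmin, mul_comm]
  exact mul_abs_sub_le_integral_abs_sub hT.le hThat.le (integrable hm1 hb1 hT.le)
    (integrable hm2 hb2 hThat.le) (fun t ht => (hb1 t ht).1) (fun t ht => (hb2 t ht).1)
    (hint1.trans hint2.symm)

/-- Jump-time comparison inequality: if two rates `λ, λ̂` take values in
`[λ_min, λ_max]` and `∫₀^T λ = ∫₀^T̂ λ̂ = θ`, then
`|T - T̂| ≤ (1/λ_min) ∫₀^{T∧T̂} |λ - λ̂|`. -/
theorem stmt19 (lamMin lamMax θ T That : ℝ) (hmin : 0 < lamMin)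
    (hle : lamMin ≤ lamMax)
    (lam lamHat : ℝ → ℝ) (hm1 : Measurable lam) (hm2 : Measurable lamHat)
    (hb1 : ∀ t ≥ (0 : ℝ), lamMin ≤ lam t ∧ lam t ≤ lamMax)
    (hb2 : ∀ t ≥ (0 : ℝ), lamMin ≤ lamHat t ∧ lamHat t ≤ lamMax)
    (hθ : 0 < θ) (hT : 0 < T) (hThat : 0 < That)
    (hint1 : ∫ t in (0 : ℝ)..T, lam t = θ)
    (hint2 : ∫ t in (0 : ℝ)..That, lamHat t = θ) :
    |T - That| ≤ (1 / lamMin) * ∫ t in (0 : ℝ)..(min T That), |lam t - lamHat t| :=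
  stmt19_general lamMin lamMax θ T That hmin lam lamHat hm1 hm2 hb1 hb2 hT hThat hint1 hint2
end
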